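/- Let A be a real n×n matrix, τ > 0, let P_1, …, P_m and Q be symmetric positive definite n×n matrices, let γ_1, …, γ_m ≥ 0 be scalars, and fix r ∈ {1,…,m}. Suppose exp(A^T τ) Q exp(A τ) ≺ P_r + Σ_{s≠r} γ_s (P_s − P_r). Then for every x ≠ 0 such that x^T P_r x ≥ x^T P_s x for all s ∈ {1,…,m}, one has x^T exp(A^T τ) Q exp(A τ) x < x^T P_r x. Consequently, if the above holds for every r (with scalars depending on r), then for all x ≠ 0, (exp(Aτ)x)^T Q (exp(Aτ)x) < max_{1≤r≤m} x^T P_r x. -/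

import Mathlib

/-! At a point `x` where the `r`-th quadratic form is maximal, every term
`γ_s (xᵀ P_s x − xᵀ P_r x)` is nonpositive, so positive definiteness of
`P_r + ∑ γ_s (P_s − P_r) − M` evaluated at `x` already gives `xᵀ M x < xᵀ P_r x`.
For the second claim, apply this at an index `r` attaining the maximum, and use
`exp (τ Aᵀ) = (exp (τ A))ᵀ` to rewrite `xᵀ exp(τ Aᵀ) Q exp(τ A) x` as `(exp(τ A) x)ᵀ Q (exp(τ A) x)`. -/

open Matrix NormedSpace

theorem dotProduct_mulVec_lt_of_posDef_sProcedure {ι n : Type*} [Fintype n]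
    (P : ι → Matrix n n ℝ) (M : Matrix n n ℝ) (r : ι) (t : Finset ι) (γ : ι → ℝ)
    (hγ : ∀ s ∈ t, 0 ≤ γ s) (h : (P r + ∑ s ∈ t, γ s • (P s - P r) - M).PosDef)
    {x : n → ℝ} (hx : x ≠ 0) (hmax : ∀ s ∈ t, x ⬝ᵥ P s *ᵥ x ≤ x ⬝ᵥ P r *ᵥ x) :
    x ⬝ᵥ M *ᵥ x < x ⬝ᵥ P r *ᵥ x := by
  have hpos : 0 < x ⬝ᵥ P r *ᵥ x + ∑ s ∈ t, γ s * (x ⬝ᵥ P s *ᵥ x - x ⬝ᵥ P r *ᵥ x)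
      - x ⬝ᵥ M *ᵥ x := by
    simpa [sub_mulVec, add_mulVec, sum_mulVec, smul_mulVec, dotProduct_sum] using
      h.dotProduct_mulVec_pos hx
  have hsum : ∑ s ∈ t, γ s * (x ⬝ᵥ P s *ᵥ x - x ⬝ᵥ P r *ᵥ x) ≤ 0 :=
    Finset.sum_nonpos fun s hs =>
      mul_nonpos_of_nonneg_of_nonpos (hγ s hs) (sub_nonpos.mpr (hmax s hs))
  linarith

theorem dotProduct_transpose_mul_mul_mulVec {n : Type*} [Fintype n] (B Q : Matrix n n ℝ)
    (x : n → ℝ) : x ⬝ᵥ (Bᵀ * Q * B) *ᵥ x = (B *ᵥ x) ⬝ᵥ Q *ᵥ (B *ᵥ x) := by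
  rw [← mulVec_mulVec, ← mulVec_mulVec, dotProduct_mulVec, vecMul_transpose]

theorem exp_smul_transpose {n : Type*} [Fintype n] [DecidableEq n] (τ : ℝ)
    (A : Matrix n n ℝ) : exp (τ • Aᵀ) = (exp (τ • A))ᵀ := by
  rw [← transpose_smul, exp_transpose]

theorem jump_s_procedure_general
    (n m : ℕ) (hm : 0 < m) (A : Matrix (Fin n) (Fin n) ℝ) (τ : ℝ)
    (P : Fin m → Matrix (Fin n) (Fin n) ℝ) (Q : Matrix (Fin n) (Fin n) ℝ)
    (γ : Fin m → Fin m → ℝ) (hγ : ∀ r s, 0 ≤ γ r s) :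
    (∀ r : Fin m,
      ((P r + ∑ s ∈ Finset.univ.erase r, γ r s • (P s - P r)) -
        (exp (τ • Aᵀ) * Q * exp (τ • A))).PosDef →
      ∀ x : Fin n → ℝ, x ≠ 0 → (∀ s : Fin m, x ⬝ᵥ P s *ᵥ x ≤ x ⬝ᵥ P r *ᵥ x) →
        x ⬝ᵥ (exp (τ • Aᵀ) * Q * exp (τ • A)) *ᵥ x < x ⬝ᵥ P r *ᵥ x) ∧
    ((∀ r : Fin m,
      ((P r + ∑ s ∈ Finset.univ.erase r, γ r s • (P s - P r)) -
        (exp (τ • Aᵀ) * Q * exp (τ • A))).PosDef) →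
      ∀ x : Fin n → ℝ, x ≠ 0 →
        (exp (τ • A) *ᵥ x) ⬝ᵥ Q *ᵥ (exp (τ • A) *ᵥ x) <
          Finset.univ.sup' (Finset.univ_nonempty_iff.mpr ⟨⟨0, hm⟩⟩)
            (fun r : Fin m => x ⬝ᵥ P r *ᵥ x)) := by
  refine ⟨fun r h x hx hmax => dotProduct_mulVec_lt_of_posDef_sProcedure P _ r _ (γ r)
      (fun s _ => hγ r s) h hx (fun s _ => hmax s), fun hall x hx => ?_⟩
  obtain ⟨r, -, hr⟩ := Finset.exists_mem_eq_sup' (Finset.univ_nonempty_iff.mpr ⟨⟨0, hm⟩⟩)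
    (fun r : Fin m => x ⬝ᵥ P r *ᵥ x)
  have hmax : ∀ s, x ⬝ᵥ P s *ᵥ x ≤ x ⬝ᵥ P r *ᵥ x :=
    fun s => hr ▸ Finset.le_sup' (fun r : Fin m => x ⬝ᵥ P r *ᵥ x) (Finset.mem_univ s)
  rw [hr, ← dotProduct_transpose_mul_mul_mulVec, ← exp_smul_transpose]
  exact dotProduct_mulVec_lt_of_posDef_sProcedure P _ r _ (γ r) (fun s _ => hγ r s)
    (hall r) hx (fun s _ => hmax s)

/-- the S-procedure step for the jump condition. If
`exp(Aᵀτ) Q exp(Aτ) ≺ P_r + ∑_{s≠r} γ_s (P_s − P_r)` then at every nonzero `x`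
where the `r`-th quadratic is maximal the jump quadratic is strictly below
`xᵀ P_r x`; consequently, if this holds for every `r` (with scalars depending on `r`),
then `(exp(Aτ)x)ᵀ Q (exp(Aτ)x) < max_r xᵀ P_r x` for every `x ≠ 0`. -/
theorem jump_s_procedure
    (n m : ℕ) (hm : 0 < m) (A : Matrix (Fin n) (Fin n) ℝ) (τ : ℝ) (hτ : 0 < τ)
    (P : Fin m → Matrix (Fin n) (Fin n) ℝ) (Q : Matrix (Fin n) (Fin n) ℝ)
    (hPsymm : ∀ r, (P r).IsSymm) (hPpos : ∀ r, (P r).PosDef)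
    (hQsymm : Q.IsSymm) (hQpos : Q.PosDef)
    (γ : Fin m → Fin m → ℝ) (hγ : ∀ r s, 0 ≤ γ r s) :
    (∀ r : Fin m,
      ((P r + ∑ s ∈ Finset.univ.erase r, γ r s • (P s - P r)) -
        (exp (τ • Aᵀ) * Q * exp (τ • A))).PosDef →
      ∀ x : Fin n → ℝ, x ≠ 0 → (∀ s : Fin m, x ⬝ᵥ P s *ᵥ x ≤ x ⬝ᵥ P r *ᵥ x) →
        x ⬝ᵥ (exp (τ • Aᵀ) * Q * exp (τ • A)) *ᵥ x < x ⬝ᵥ P r *ᵥ x) ∧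
    ((∀ r : Fin m,
      ((P r + ∑ s ∈ Finset.univ.erase r, γ r s • (P s - P r)) -
        (exp (τ • Aᵀ) * Q * exp (τ • A))).PosDef) →
      ∀ x : Fin n → ℝ, x ≠ 0 →
        (exp (τ • A) *ᵥ x) ⬝ᵥ Q *ᵥ (exp (τ • A) *ᵥ x) <
          Finset.univ.sup' (Finset.univ_nonempty_iff.mpr ⟨⟨0, hm⟩⟩)
            (fun r : Fin m => x ⬝ᵥ P r *ᵥ x)) :=
  jump_s_procedure_general n m hm A τ P Q γ hγ
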